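/- arXiv:1406.4297 — 2 statements merged into one kernel-verified Lean document; each statement's English description precedes it below -/
import Mathlib

section
/- Let v : I₁ × I₂ → ℝ be continuous, satisfy v(x,y) ≥ −y, be nonincreasing in x, and such that y ↦ v(x,y) + y is nondecreasing in y for each x. Define y*(x) := inf{y ∈ I₂ : v(x,y) > −y} (with inf ∅ := sup I₂). Then y* : I₁ → closure(I₂) is nondecreasing and right-continuous. -/
/-!
The continuation region `{y ∈ I₂ | -y < v x y}` shrinks as `x` grows, because `v` is
nonincreasing in `x`; hence its infimum `y*` is nondecreasing. For fixed `y` the condition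
`-y < v x y` is open in `x` by continuity of `v`, which makes `y*` upper semicontinuous.
Being also nondecreasing, `y*` is lower semicontinuous from the right, hence right-continuous.
-/

open Set Filter

/-- The optimal stopping boundary `y*(x) = inf {y ∈ I₂ : v(x,y) > -y}`
(with the convention `inf ∅ = sup I₂`), as an extended-real-valued function. -/
noncomputable def ystarBoundary (I₂ : Set ℝ) (v : ℝ → ℝ → ℝ) (x : ℝ) : EReal :=
  open Classical in
  if ({y | y ∈ I₂ ∧ -y < v x y}).Nonempty then
    sInf ((fun y : ℝ => (y : EReal)) '' {y | y ∈ I₂ ∧ -y < v x y})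
  else sSup ((fun y : ℝ => (y : EReal)) '' I₂)

theorem UpperSemicontinuousWithinAt.continuousWithinAt_of_forall_le
    {α β : Type*} [TopologicalSpace α] [LinearOrder β] [TopologicalSpace β] [OrderTopology β]
    {f : α → β} {s : Set α} {x : α} (hf : UpperSemicontinuousWithinAt f s x)
    (hle : ∀ x' ∈ s, f x ≤ f x') : ContinuousWithinAt f s x :=
  continuousWithinAt_iff_lower_upperSemicontinuousWithinAt.2
    ⟨fun _ hb => eventually_nhdsWithin_of_forall fun x' hx' => hb.trans_le (hle x' hx'), hf⟩

section ystarBoundary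

variable {I₂ : Set ℝ} {v : ℝ → ℝ → ℝ}

theorem ystarBoundary_mem_closure (hI₂ : I₂.Nonempty) (x : ℝ) :
    ystarBoundary I₂ v x ∈ closure ((fun y : ℝ => (y : EReal)) '' I₂) := by
  unfold ystarBoundary
  split_ifs with h
  · exact closure_mono (image_mono fun _ hy => hy.1)
      (csInf_mem_closure (h.image _) (OrderBot.bddBelow _))
  · exact csSup_mem_closure (hI₂.image _) (OrderTop.bddAbove _)

theorem ystarBoundary_le_of_mem {x y : ℝ} (hy : y ∈ I₂) (hv : -y < v x y) :
    ystarBoundary I₂ v x ≤ y := by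
  rw [ystarBoundary, if_pos ⟨y, hy, hv⟩]
  exact sInf_le ⟨y, ⟨hy, hv⟩, rfl⟩

theorem ystarBoundary_le_sSup (x : ℝ) :
    ystarBoundary I₂ v x ≤ sSup ((fun y : ℝ => (y : EReal)) '' I₂) := by
  by_cases h : ({y | y ∈ I₂ ∧ -y < v x y}).Nonempty
  · obtain ⟨y, hy, hv⟩ := h
    exact (ystarBoundary_le_of_mem hy hv).trans (le_sSup ⟨y, hy, rfl⟩)
  · rw [ystarBoundary, if_neg h]

theorem exists_lt_or_sSup_lt_of_ystarBoundary_lt {x : ℝ} {b : EReal}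
    (hb : ystarBoundary I₂ v x < b) :
    (∃ y ∈ I₂, -y < v x y ∧ (y : EReal) < b) ∨
      sSup ((fun y : ℝ => (y : EReal)) '' I₂) < b := by
  unfold ystarBoundary at hb
  split_ifs at hb
  · obtain ⟨_, ⟨y, ⟨hy, hv⟩, rfl⟩, hyb⟩ := sInf_lt_iff.1 hb
    exact .inl ⟨y, hy, hv, hyb⟩
  · exact .inr hb

theorem ystarBoundary_le_ystarBoundary {x x' : ℝ} (h : ∀ y ∈ I₂, v x' y ≤ v x y) :
    ystarBoundary I₂ v x ≤ ystarBoundary I₂ v x' :=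
  le_of_forall_gt fun _ hb => by
    rcases exists_lt_or_sSup_lt_of_ystarBoundary_lt hb with ⟨y, hy, hv, hyb⟩ | hsup
    · exact (ystarBoundary_le_of_mem hy (hv.trans_le (h y hy))).trans_lt hyb
    · exact (ystarBoundary_le_sSup x).trans_lt hsup

theorem upperSemicontinuousWithinAt_ystarBoundary {s : Set ℝ} {x : ℝ}
    (h : ∀ y ∈ I₂, ContinuousWithinAt (fun x' => v x' y) s x) :
    UpperSemicontinuousWithinAt (ystarBoundary I₂ v) s x := by
  intro b hb
  rcases exists_lt_or_sSup_lt_of_ystarBoundary_lt hb with ⟨y, hy, hv, hyb⟩ | hsup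
  · filter_upwards [(h y hy).eventually (Ioi_mem_nhds hv)] with x' hv'
    exact (ystarBoundary_le_of_mem hy hv').trans_lt hyb
  · exact Eventually.of_forall fun x' => (ystarBoundary_le_sSup x').trans_lt hsup

end ystarBoundary

theorem ystar_monotone_rightContinuous_general
    (I₁ I₂ : Set ℝ) (hI₁o : IsOpen I₁)
    (hI₂o : IsOpen I₂) (hI₂ne : I₂.Nonempty)
    (v : ℝ → ℝ → ℝ)
    (hcont : ContinuousOn (fun p : ℝ × ℝ => v p.1 p.2) (I₁ ×ˢ I₂))
    (hx_anti : ∀ y ∈ I₂, AntitoneOn (fun x => v x y) I₁) :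
    (∀ x ∈ I₁, ystarBoundary I₂ v x ∈ closure ((fun y : ℝ => (y : EReal)) '' I₂)) ∧
    MonotoneOn (ystarBoundary I₂ v) I₁ ∧
    (∀ x ∈ I₁, Tendsto (ystarBoundary I₂ v) (nhdsWithin x (I₁ ∩ Ioi x))
      (nhds (ystarBoundary I₂ v x))) := by
  have hmono : MonotoneOn (ystarBoundary I₂ v) I₁ := fun x hx x' hx' hle =>
    ystarBoundary_le_ystarBoundary fun y hy => hx_anti y hy hx hx' hle
  refine ⟨fun x _ => ystarBoundary_mem_closure hI₂ne x, hmono, fun x hx => ?_⟩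
  have hvx : ∀ y ∈ I₂, ContinuousAt (fun x' => v x' y) x := fun y hy =>
    (hcont.continuousAt ((hI₁o.prod hI₂o).mem_nhds ⟨hx, hy⟩)).comp
      (continuousAt_id.prodMk continuousAt_const)
  exact (upperSemicontinuousWithinAt_ystarBoundary fun y hy =>
    (hvx y hy).continuousWithinAt).continuousWithinAt_of_forall_le
      fun x' hx' => hmono hx hx'.1 hx'.2.le

/-- The boundary `y*` takes values in the closure of `I₂`, is nondecreasing and
right-continuous on `I₁`. -/
theorem ystar_monotone_rightContinuous
    (I₁ I₂ : Set ℝ) (hI₁o : IsOpen I₁) (hI₁c : I₁.OrdConnected)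
    (hI₂o : IsOpen I₂) (hI₂c : I₂.OrdConnected) (hI₂ne : I₂.Nonempty)
    (v : ℝ → ℝ → ℝ)
    (hcont : ContinuousOn (fun p : ℝ × ℝ => v p.1 p.2) (I₁ ×ˢ I₂))
    (hbd : ∀ x ∈ I₁, ∀ y ∈ I₂, -y ≤ v x y)
    (hx_anti : ∀ y ∈ I₂, AntitoneOn (fun x => v x y) I₁)
    (hmono : ∀ x ∈ I₁, MonotoneOn (fun y => v x y + y) I₂) :
    (∀ x ∈ I₁, ystarBoundary I₂ v x ∈ closure ((fun y : ℝ => (y : EReal)) '' I₂)) ∧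
    MonotoneOn (ystarBoundary I₂ v) I₁ ∧
    (∀ x ∈ I₁, Tendsto (ystarBoundary I₂ v) (nhdsWithin x (I₁ ∩ Ioi x))
      (nhds (ystarBoundary I₂ v x))) :=
  ystar_monotone_rightContinuous_general I₁ I₂ hI₁o hI₂o hI₂ne v hcont hx_anti
end

section
/- With v continuous on I₁ × I₂ × ℝ₊, nondecreasing in z, nonincreasing in x, v(x,y;z) ≥ −y, and y ↦ v(x,y;z)+y nondecreasing, define z*(x,y) := inf{z ∈ ℝ₊ : v(x,y;z) > −y}. Then: (a) x ↦ z*(x,y) is nondecreasing and right-continuous for each y; (b) y ↦ z*(x,y) is nonincreasing and left-continuous for each x; (c) (x,y) ↦ z*(x,y) is upper-semicontinuous. -/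
/-!
`z*(x,y) < c` exactly when some `z < c` satisfies `v(x,y;z) + y > 0`, and for fixed `z` this
condition is open in `(x,y)` by continuity of `v`; hence `z*` is upper-semicontinuous. The sets
defining `z*` shrink as `x` grows and grow with `y`, so `z*` is nondecreasing in `x` and
nonincreasing in `y`, and an upper-semicontinuous monotone function is continuous from the side
on which its values lie above the value at the point.
-/

open Set Filter Topology

/-- The free boundary of the control problem,
`z*(x,y) = inf {z ≥ 0 : v(x,y;z) > -y}`, with the convention `inf ∅ = +∞`. -/
noncomputable def zstarFam (v : ℝ → ℝ → ℝ → ℝ) (x y : ℝ) : EReal :=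
  sInf ((fun z : ℝ => (z : EReal)) '' {z | 0 ≤ z ∧ -y < v x y z})

theorem upperSemicontinuousOn_sInf_image {X ι β : Type*} [TopologicalSpace X]
    [CompleteLinearOrder β] {s : Set X} (c : ι → β) {S : X → Set ι}
    (hS : ∀ x ∈ s, ∀ i ∈ S x, ∀ᶠ x' in 𝓝[s] x, i ∈ S x') :
    UpperSemicontinuousOn (fun x => sInf (c '' S x)) s := by
  intro x hx b hb
  obtain ⟨_, ⟨i, hi, rfl⟩, hib⟩ := sInf_lt_iff.mp hb
  filter_upwards [hS x hx i hi] with x' hx'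
  exact (sInf_le (mem_image_of_mem c hx')).trans_lt hib

theorem UpperSemicontinuousWithinAt.tendsto_of_eventually_ge {X β : Type*} [TopologicalSpace X]
    [LinearOrder β] [TopologicalSpace β] [OrderTopology β] {f : X → β} {s : Set X} {x : X}
    {l : Filter X} (hf : UpperSemicontinuousWithinAt f s x) (hl : l ≤ 𝓝[s] x)
    (hge : ∀ᶠ x' in l, f x ≤ f x') : Tendsto f l (𝓝 (f x)) :=
  tendsto_order.2 ⟨fun _ ha => hge.mono fun _ h => ha.trans_le h, fun b hb => hl (hf b hb)⟩

section

variable {v : ℝ → ℝ → ℝ → ℝ}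

theorem zstarFam_le_of_imp {x y x' y' : ℝ} (h : ∀ z ≥ (0 : ℝ), -y < v x y z → -y' < v x' y' z) :
    zstarFam v x' y' ≤ zstarFam v x y :=
  sInf_le_sInf <| image_mono fun z ⟨hz, hzv⟩ => ⟨hz, h z hz hzv⟩

theorem zstarFam_monotoneOn_fst {s : Set ℝ} {y : ℝ}
    (hv : ∀ z ≥ (0 : ℝ), AntitoneOn (fun x => v x y z) s) :
    MonotoneOn (fun x => zstarFam v x y) s :=
  fun _ hx _ hx' hxx' => zstarFam_le_of_imp fun z hz hzv => hzv.trans_le (hv z hz hx hx' hxx')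

theorem zstarFam_antitoneOn_snd {s : Set ℝ} {x : ℝ}
    (hv : ∀ z ≥ (0 : ℝ), MonotoneOn (fun y => v x y z + y) s) :
    AntitoneOn (fun y => zstarFam v x y) s := by
  intro y hy y' hy' hyy'
  refine zstarFam_le_of_imp fun z hz hzv => ?_
  have := hv z hz hy hy' hyy'
  dsimp only at this
  linarith

theorem zstarFam_upperSemicontinuousOn {I₁ I₂ : Set ℝ}
    (hcont : ContinuousOn (fun p : ℝ × ℝ × ℝ => v p.1 p.2.1 p.2.2) (I₁ ×ˢ I₂ ×ˢ Ici 0)) :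
    UpperSemicontinuousOn (fun p : ℝ × ℝ => zstarFam v p.1 p.2) (I₁ ×ˢ I₂) := by
  refine upperSemicontinuousOn_sInf_image _ fun p hp z ⟨hz, hzv⟩ => ?_
  have hvz : ContinuousWithinAt (fun q : ℝ × ℝ => v q.1 q.2 z + q.2) (I₁ ×ˢ I₂) p :=
    ((hcont.comp (f := fun q : ℝ × ℝ => (q.1, q.2, z)) (by fun_prop)
      fun q hq => ⟨hq.1, hq.2, hz⟩).continuousWithinAt hp).add
      continuous_snd.continuousWithinAt
  have hpos : (0 : ℝ) < v p.1 p.2 z + p.2 := by linarith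
  filter_upwards [hvz.eventually (eventually_gt_nhds hpos)] with q hq
  exact ⟨hz, by linarith⟩

end

theorem zstar_monotone_semicontinuous_general
    (I₁ I₂ : Set ℝ)
    (v : ℝ → ℝ → ℝ → ℝ)
    (hcont : ContinuousOn (fun p : ℝ × ℝ × ℝ => v p.1 p.2.1 p.2.2) (I₁ ×ˢ I₂ ×ˢ Ici 0))
    (hx_anti : ∀ y ∈ I₂, ∀ z ≥ (0 : ℝ), AntitoneOn (fun x => v x y z) I₁)
    (hy_mono : ∀ x ∈ I₁, ∀ z ≥ (0 : ℝ), MonotoneOn (fun y => v x y z + y) I₂) :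
    (∀ y ∈ I₂, MonotoneOn (fun x => zstarFam v x y) I₁) ∧
    (∀ y ∈ I₂, ∀ x ∈ I₁, Tendsto (fun x' => zstarFam v x' y)
      (nhdsWithin x (I₁ ∩ Ioi x)) (nhds (zstarFam v x y))) ∧
    (∀ x ∈ I₁, AntitoneOn (fun y => zstarFam v x y) I₂) ∧
    (∀ x ∈ I₁, ∀ y ∈ I₂, Tendsto (fun y' => zstarFam v x y')
      (nhdsWithin y (I₂ ∩ Iio y)) (nhds (zstarFam v x y))) ∧
    UpperSemicontinuousOn (fun p : ℝ × ℝ => zstarFam v p.1 p.2) (I₁ ×ˢ I₂) := by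
  have husc := zstarFam_upperSemicontinuousOn hcont
  have hmono y hy := zstarFam_monotoneOn_fst (hx_anti y hy)
  have hanti x hx := zstarFam_antitoneOn_snd (hy_mono x hx)
  refine ⟨hmono, fun y hy x hx => ?_, hanti, fun x hx y hy => ?_, husc⟩
  · have hx_usc : UpperSemicontinuousWithinAt (fun x' => zstarFam v x' y) I₁ x :=
      (husc (x, y) ⟨hx, hy⟩).comp (g := fun x' => (x', y)) (by fun_prop)
        fun _ hx' => ⟨hx', hy⟩
    exact hx_usc.tendsto_of_eventually_ge (nhdsWithin_mono _ inter_subset_left)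
      (eventually_nhdsWithin_of_forall fun _ hx' => hmono y hy hx hx'.1 hx'.2.le)
  · have hy_usc : UpperSemicontinuousWithinAt (fun y' => zstarFam v x y') I₂ y :=
      (husc (x, y) ⟨hx, hy⟩).comp (g := fun y' => (x, y')) (by fun_prop)
        fun _ hy' => ⟨hx, hy'⟩
    exact hy_usc.tendsto_of_eventually_ge (nhdsWithin_mono _ inter_subset_left)
      (eventually_nhdsWithin_of_forall fun _ hy' => hanti x hx hy'.1 hy hy'.2.le)

/-- `z*` is nondecreasing and right-continuous in `x`, nonincreasing and left-continuous
in `y`, and jointly upper-semicontinuous. -/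
theorem zstar_monotone_semicontinuous
    (I₁ I₂ : Set ℝ) (hI₁o : IsOpen I₁) (hI₁c : I₁.OrdConnected)
    (hI₂o : IsOpen I₂) (hI₂c : I₂.OrdConnected)
    (v : ℝ → ℝ → ℝ → ℝ)
    (hcont : ContinuousOn (fun p : ℝ × ℝ × ℝ => v p.1 p.2.1 p.2.2) (I₁ ×ˢ I₂ ×ˢ Ici 0))
    (hz_mono : ∀ x ∈ I₁, ∀ y ∈ I₂, MonotoneOn (fun z => v x y z) (Ici 0))
    (hx_anti : ∀ y ∈ I₂, ∀ z ≥ (0 : ℝ), AntitoneOn (fun x => v x y z) I₁)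
    (hbd : ∀ x ∈ I₁, ∀ y ∈ I₂, ∀ z ≥ (0 : ℝ), -y ≤ v x y z)
    (hy_mono : ∀ x ∈ I₁, ∀ z ≥ (0 : ℝ), MonotoneOn (fun y => v x y z + y) I₂) :
    (∀ y ∈ I₂, MonotoneOn (fun x => zstarFam v x y) I₁) ∧
    (∀ y ∈ I₂, ∀ x ∈ I₁, Tendsto (fun x' => zstarFam v x' y)
      (nhdsWithin x (I₁ ∩ Ioi x)) (nhds (zstarFam v x y))) ∧
    (∀ x ∈ I₁, AntitoneOn (fun y => zstarFam v x y) I₂) ∧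
    (∀ x ∈ I₁, ∀ y ∈ I₂, Tendsto (fun y' => zstarFam v x y')
      (nhdsWithin y (I₂ ∩ Iio y)) (nhds (zstarFam v x y))) ∧
    UpperSemicontinuousOn (fun p : ℝ × ℝ => zstarFam v p.1 p.2) (I₁ ×ˢ I₂) :=
  zstar_monotone_semicontinuous_general I₁ I₂ v hcont hx_anti hy_mono
end
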